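/- arXiv:2407.15601 — 2 statements merged into one kernel-verified Lean document; each statement's English description precedes it below -/
import Mathlib

section
/- With Σ_τ(L,U) as above and L, U of class (D), the essential supremum τ̊ := ess sup Σ_τ(L,U) is a stopping time, and there exists a nondecreasing sequence (σ_k) ⊂ Σ_τ(L,U) with σ_k ↗ τ̊ almost surely. -/
open MeasureTheory Filter Set Topology
open scoped Classical

/-!
`Σ_τ(L,U)` is closed under `⊔`: shift the two sandwiched semimartingales by `N`, so that the lower
barrier becomes nonnegative, kill them at `σ` and `σ'`, take their maximum, and add a jump at
`σ ⊔ σ'` that restores the lower barrier there.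

For a `⊔`-closed family of uniformly bounded measurable functions, pick members whose integrals
approach the supremum `s` of all integrals and pass to running maxima. Their pointwise limit `σ∞`
has integral `s`, and for every member `σ` so does `σ ⊔ σ∞`, a limit of members; hence `σ ≤ σ∞`
a.e. and `σ∞` is the essential supremum. As a countable supremum of stopping times `σ∞` is a
stopping time, and so is the a.e. equal `τ̊` by completeness of the filtration.
-/

/-- The family `Σ_τ(L,U)` of stopping times `σ` with `τ ≤ σ ≤ T` such that some
(abstract) càdlàg semimartingale lies between the barriers `L` and `U` on `[τ, σ]`. -/
def SigmaSet {Ω : Type*} {m : MeasurableSpace Ω} (𝓕 : Filtration ℝ m)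
    (Sem : (ℝ → Ω → ℝ) → Prop) (L U : ℝ → Ω → ℝ) (T : ℝ) (τ : Ω → ℝ) :
    Set (Ω → ℝ) :=
  {σ | IsStoppingTime 𝓕 (fun ω => (σ ω : WithTop ℝ)) ∧ (∀ ω, τ ω ≤ σ ω ∧ σ ω ≤ T) ∧
    ∃ X : ℝ → Ω → ℝ, Sem X ∧
      ∀ ω, ∀ t ∈ Set.Icc (τ ω) (σ ω), L t ω ≤ X t ω ∧ X t ω ≤ U t ω}

/-- A process `X` is of class (D) on `[0,T]`: the family `{X_σ}` over stopping
times `σ ≤ T` is uniformly integrable. -/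
def ClassD {Ω : Type*} {m : MeasurableSpace Ω} (𝓕 : Filtration ℝ m) (T : ℝ)
    (μ : Measure Ω) (X : ℝ → Ω → ℝ) : Prop :=
  UniformIntegrable
    (fun σ : {σ : Ω → ℝ // IsStoppingTime 𝓕 (fun ω => (σ ω : WithTop ℝ)) ∧ ∀ ω, 0 ≤ σ ω ∧ σ ω ≤ T} =>
      fun ω => X (σ.1 ω) ω) 1 μ

noncomputable def killedAt (x : ℝ → ℝ) (a s : ℝ) (t : ℝ) : ℝ :=
  if t < s then x (max t a) else 0

section KilledAt

variable {x : ℝ → ℝ} {a s t : ℝ}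

theorem killedAt_of_le (h : s ≤ t) : killedAt x a s t = 0 :=
  if_neg h.not_gt

theorem killedAt_le {h : ℝ → ℝ} (hx : ∀ r ∈ Icc a s, x r ≤ h r) (h0 : 0 ≤ h t) (ht : a ≤ t) :
    killedAt x a s t ≤ h t := by
  unfold killedAt
  split_ifs with hts
  · rw [max_eq_left ht]
    exact hx t ⟨ht, hts.le⟩
  · exact h0

theorem le_killedAt {g : ℝ → ℝ} (hx : ∀ r ∈ Icc a s, g r ≤ x r) (ht : a ≤ t) (hts : t < s) :
    g t ≤ killedAt x a s t := by
  rw [killedAt, if_pos hts, max_eq_left ht]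
  exact hx t ⟨ht, hts.le⟩

end KilledAt

theorem max_killedAt_add_jump_mem_Icc {l u n x x' : ℝ → ℝ} {a s s' t : ℝ} (hlu : l t ≤ u t)
    (hn : ∀ r, 0 ≤ l r + n r) (hx : ∀ r ∈ Icc a s, l r ≤ x r ∧ x r ≤ u r)
    (hx' : ∀ r ∈ Icc a s', l r ≤ x' r ∧ x' r ≤ u r) (ht : t ∈ Icc a (max s s')) :
    max (killedAt (fun r => x r + n r) a s t) (killedAt (fun r => x' r + n r) a s' t) +
        (if max s s' ≤ t then l (max s s') + n (max s s') else 0) + -n t ∈ Icc (l t) (u t) := by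
  obtain ⟨hat, hts⟩ := ht
  rcases hts.lt_or_eq with hlt | rfl
  · have hU : ∀ {y : ℝ → ℝ} {b : ℝ}, (∀ r ∈ Icc a b, l r ≤ y r ∧ y r ≤ u r) →
        killedAt (fun r => y r + n r) a b t ≤ u t + n t := fun hy =>
      killedAt_le (h := fun r => u r + n r) (fun r hr => by linarith [(hy r hr).2])
        (by linarith [hn t]) hat
    have hL : l t + n t ≤
        max (killedAt (fun r => x r + n r) a s t) (killedAt (fun r => x' r + n r) a s' t) := by
      rcases lt_max_iff.1 hlt with h | h
      · exact le_max_of_le_left <| le_killedAt (g := fun r => l r + n r)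
          (fun r hr => by linarith [(hx r hr).1]) hat h
      · exact le_max_of_le_right <| le_killedAt (g := fun r => l r + n r)
          (fun r hr => by linarith [(hx' r hr).1]) hat h
    rw [if_neg hlt.not_ge]
    constructor <;> linarith [max_le (hU hx) (hU hx')]
  · rw [killedAt_of_le (le_max_left _ _), killedAt_of_le (le_max_right _ _), if_pos le_rfl,
      max_self]
    constructor <;> linarith

theorem supClosed_sigmaSet {Ω : Type*} {m : MeasurableSpace Ω} {𝓕 : Filtration ℝ m}
    {Sem : (ℝ → Ω → ℝ) → Prop}
    (hSemAdd : ∀ X Y : ℝ → Ω → ℝ, Sem X → Sem Y → Sem (fun t ω => X t ω + Y t ω))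
    (hSemNeg : ∀ X : ℝ → Ω → ℝ, Sem X → Sem (fun t ω => - X t ω))
    (hSemMax : ∀ X Y : ℝ → Ω → ℝ, Sem X → Sem Y →
      Sem (fun t ω => max (X t ω) (Y t ω)))
    (hSemStop : ∀ (X : ℝ → Ω → ℝ) (ν ρ : Ω → ℝ), IsStoppingTime 𝓕 (fun ω => (ρ ω : WithTop ℝ)) →
      Sem X → Sem (fun t ω => if t < ρ ω then X (max t (ν ω)) ω else 0))
    (hSemJump : ∀ (X : ℝ → Ω → ℝ) (ρ : Ω → ℝ) (c : Ω → ℝ),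
      IsStoppingTime 𝓕 (fun ω => (ρ ω : WithTop ℝ)) → Sem X →
      Sem (fun t ω => X t ω + (if ρ ω ≤ t then c ω else 0)))
    {L U : ℝ → Ω → ℝ} (hLU : ∀ t ω, L t ω ≤ U t ω)
    (hLdom : ∃ N : ℝ → Ω → ℝ, Sem N ∧ ∀ t ω, 0 ≤ L t ω + N t ω) {T : ℝ} {τ : Ω → ℝ} :
    SupClosed (SigmaSet 𝓕 Sem L U T τ) := by
  rintro σ ⟨hσ, hσbd, X, hX, hXLU⟩ σ' ⟨hσ', hσ'bd, X', hX', hX'LU⟩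
  obtain ⟨N, hN, hLN⟩ := hLdom
  have hρ : IsStoppingTime 𝓕 fun ω => ((max (σ ω) (σ' ω) : ℝ) : WithTop ℝ) := by
    simpa only [WithTop.coe_max] using hσ.max hσ'
  refine ⟨hρ, fun ω => ⟨le_max_of_le_left (hσbd ω).1, max_le (hσbd ω).2 (hσ'bd ω).2⟩,
    fun t ω => max (killedAt (fun r => X r ω + N r ω) (τ ω) (σ ω) t)
        (killedAt (fun r => X' r ω + N r ω) (τ ω) (σ' ω) t) +
      (if max (σ ω) (σ' ω) ≤ t then L (max (σ ω) (σ' ω)) ω + N (max (σ ω) (σ' ω)) ω else 0) +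
      -N t ω, ?_, fun ω t ht => max_killedAt_add_jump_mem_Icc (hLU t ω) (hLN · ω) (hXLU ω)
        (hX'LU ω) ht⟩
  exact hSemAdd _ _ (hSemJump _ _ _ hρ (hSemMax _ _ (hSemStop _ τ σ hσ (hSemAdd X N hX hN))
    (hSemStop _ τ σ' hσ' (hSemAdd X' N hX' hN)))) (hSemNeg N hN)

theorem measurable_of_isStoppingTime_coe {Ω ι : Type*} {m : MeasurableSpace Ω} [LinearOrder ι]
    [TopologicalSpace ι] [OrderTopology ι] [SecondCountableTopology ι] [MeasurableSpace ι]
    [BorelSpace ι] {𝓕 : Filtration ι m} {τ : Ω → ι}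
    (hτ : IsStoppingTime 𝓕 fun ω => (τ ω : WithTop ι)) : Measurable τ :=
  measurable_of_Iic fun i => 𝓕.le i _
    (by simpa only [WithTop.coe_le_coe] using hτ i : MeasurableSet[𝓕 i] {ω | τ ω ≤ i})

theorem MeasureTheory.IsStoppingTime.ciSup {Ω ι κ : Type*} {m : MeasurableSpace Ω}
    [ConditionallyCompleteLinearOrder ι] [Countable κ] [Nonempty κ] {𝓕 : Filtration ι m}
    {τ : κ → Ω → ι} (hτ : ∀ n, IsStoppingTime 𝓕 fun ω => (τ n ω : WithTop ι))
    (hbdd : ∀ ω, BddAbove (range fun n => τ n ω)) :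
    IsStoppingTime 𝓕 fun ω => ((⨆ n, τ n ω : ι) : WithTop ι) := by
  intro i
  have : {ω | ((⨆ n, τ n ω : ι) : WithTop ι) ≤ i} = ⋂ n, {ω | (τ n ω : WithTop ι) ≤ i} := by
    ext ω
    simp only [mem_ofPred_eq, mem_iInter, WithTop.coe_le_coe, ciSup_le_iff (hbdd ω)]
  rw [this]
  exact .iInter fun n => hτ n i

section EssSup

variable {Ω : Type*} [MeasurableSpace Ω] {μ : Measure Ω} [IsFiniteMeasure μ] {C : ℝ}

theorem integrable_and_tendsto_integral_of_norm_le_const {E : Type*} [NormedAddCommGroup E]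
    [NormedSpace ℝ E] {F : ℕ → Ω → E} {f : Ω → E} (hF : ∀ n, AEStronglyMeasurable (F n) μ)
    (hFC : ∀ n ω, ‖F n ω‖ ≤ C) (hlim : ∀ᵐ ω ∂μ, Tendsto (fun n => F n ω) atTop (𝓝 (f ω))) :
    Integrable f μ ∧ Tendsto (fun n => ∫ ω, F n ω ∂μ) atTop (𝓝 (∫ ω, f ω ∂μ)) := by
  refine ⟨.of_bound (aestronglyMeasurable_of_tendsto_ae _ hF hlim) C ?_,
    tendsto_integral_of_dominated_convergence _ hF (integrable_const C)
      (fun n => ae_of_all _ (hFC n)) hlim⟩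
  filter_upwards [hlim] with ω hω
  exact le_of_tendsto' hω.norm (hFC · ω)

variable {S : Set (Ω → ℝ)}

theorem bddAbove_image_integral (hC : ∀ f ∈ S, ∀ ω, ‖f ω‖ ≤ C) :
    BddAbove ((fun f => ∫ ω, f ω ∂μ) '' S) := by
  refine ⟨C * μ.real univ, ?_⟩
  rintro _ ⟨f, hf, rfl⟩
  exact (le_abs_self _).trans (norm_integral_le_of_norm_le_const (ae_of_all _ (hC f hf)))

theorem SupClosed.exists_monotone_tendsto_sSup_integral (hS : SupClosed S) (hne : S.Nonempty)
    (hmeas : ∀ f ∈ S, Measurable f) (hC : ∀ f ∈ S, ∀ ω, ‖f ω‖ ≤ C) :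
    ∃ fs : ℕ → Ω → ℝ, (∀ n, fs n ∈ S) ∧ Monotone fs ∧
      Tendsto (fun n => ∫ ω, fs n ω ∂μ) atTop (𝓝 (sSup ((fun f => ∫ ω, f ω ∂μ) '' S))) := by
  have hint : ∀ f ∈ S, Integrable f μ := fun f hf =>
    .of_bound (hmeas f hf).aestronglyMeasurable C (ae_of_all _ (hC f hf))
  have hI := bddAbove_image_integral (μ := μ) hC
  obtain ⟨x, -, hx, hxS⟩ := exists_seq_tendsto_sSup (hne.image _) hI
  choose φ hφS hφx using hxS
  have hψS : ∀ n, partialSups φ n ∈ S := fun n => by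
    rw [partialSups_apply]
    exact hS.finsetSup'_mem _ fun k _ => hφS k
  refine ⟨partialSups φ, hψS, (partialSups φ).monotone,
    tendsto_of_tendsto_of_tendsto_of_le_of_le hx tendsto_const_nhds (fun n => ?_)
      fun n => le_csSup hI (mem_image_of_mem _ (hψS n))⟩
  rw [← hφx n]
  exact integral_mono (hint _ (hφS n)) (hint _ (hψS n)) (le_partialSups φ n)

theorem SupClosed.ae_le_iSup_of_tendsto_sSup_integral (hS : SupClosed S)
    (hmeas : ∀ f ∈ S, Measurable f) (hC : ∀ f ∈ S, ∀ ω, ‖f ω‖ ≤ C) {fs : ℕ → Ω → ℝ}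
    (hfs : ∀ n, fs n ∈ S) (hmono : Monotone fs)
    (hlim : Tendsto (fun n => ∫ ω, fs n ω ∂μ) atTop (𝓝 (sSup ((fun f => ∫ ω, f ω ∂μ) '' S))))
    {f : Ω → ℝ} (hf : f ∈ S) :
    ∀ᵐ ω ∂μ, f ω ≤ ⨆ n, fs n ω := by
  have hbdd : ∀ ω, BddAbove (range fun n => fs n ω) := fun ω =>
    ⟨C, by rintro _ ⟨n, rfl⟩; exact (le_abs_self _).trans (hC _ (hfs n) ω)⟩
  have hfs_lim : ∀ ω, Tendsto (fun n => fs n ω) atTop (𝓝 (⨆ n, fs n ω)) := fun ω =>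
    tendsto_atTop_ciSup (fun _ _ h => hmono h ω) (hbdd ω)
  obtain ⟨hg_int, hg_lim⟩ := integrable_and_tendsto_integral_of_norm_le_const (μ := μ)
    (fun n => (hmeas _ (hfs n)).aestronglyMeasurable) (fun n => hC _ (hfs n)) (ae_of_all _ hfs_lim)
  obtain ⟨hfg_int, hfg_lim⟩ := integrable_and_tendsto_integral_of_norm_le_const (μ := μ)
    (F := fun n ω => max (f ω) (fs n ω))
    (fun n => (hmeas _ (hS hf (hfs n))).aestronglyMeasurable) (fun n => hC _ (hS hf (hfs n)))
    (ae_of_all _ fun ω => tendsto_const_nhds.max (hfs_lim ω))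
  have hfg_le : ∫ ω, max (f ω) (⨆ n, fs n ω) ∂μ ≤ ∫ ω, ⨆ n, fs n ω ∂μ := by
    rw [tendsto_nhds_unique hg_lim hlim]
    exact le_of_tendsto' hfg_lim fun n =>
      le_csSup (bddAbove_image_integral (μ := μ) hC) (mem_image_of_mem _ (hS hf (hfs n)))
  have hfg_eq := (integral_eq_iff_of_ae_le hg_int hfg_int
    (ae_of_all _ fun ω => le_max_right _ _)).1
    (le_antisymm (integral_mono hg_int hfg_int fun ω => le_max_right _ _) hfg_le)
  filter_upwards [hfg_eq] with ω hω
  exact (le_max_left _ _).trans hω.ge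

theorem SupClosed.exists_monotone_ae_le_iSup (hS : SupClosed S) (hne : S.Nonempty)
    (hmeas : ∀ f ∈ S, Measurable f) (hC : ∀ f ∈ S, ∀ ω, ‖f ω‖ ≤ C) :
    ∃ fs : ℕ → Ω → ℝ, (∀ n, fs n ∈ S) ∧ Monotone fs ∧ ∀ f ∈ S, ∀ᵐ ω ∂μ, f ω ≤ ⨆ n, fs n ω :=
  let ⟨fs, hfs, hmono, hlim⟩ := hS.exists_monotone_tendsto_sSup_integral (μ := μ) hne hmeas hC
  ⟨fs, hfs, hmono, fun _ hf => hS.ae_le_iSup_of_tendsto_sSup_integral hmeas hC hfs hmono hlim hf⟩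

end EssSup

theorem essSup_sigmaSet_stoppingTime_general
    {Ω : Type*} {m : MeasurableSpace Ω} (μ : Measure Ω) [IsProbabilityMeasure μ]
    (𝓕 : Filtration ℝ m) (T : ℝ)
    (Sem : (ℝ → Ω → ℝ) → Prop)
    (hSemAdd : ∀ X Y : ℝ → Ω → ℝ, Sem X → Sem Y → Sem (fun t ω => X t ω + Y t ω))
    (hSemNeg : ∀ X : ℝ → Ω → ℝ, Sem X → Sem (fun t ω => - X t ω))
    (hSemMax : ∀ X Y : ℝ → Ω → ℝ, Sem X → Sem Y →
      Sem (fun t ω => max (X t ω) (Y t ω)))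
    (hSemStop : ∀ (X : ℝ → Ω → ℝ) (ν ρ : Ω → ℝ), IsStoppingTime 𝓕 (fun ω => (ρ ω : WithTop ℝ)) → Sem X →
      Sem (fun t ω => if t < ρ ω then X (max t (ν ω)) ω else 0))
    (hSemJump : ∀ (X : ℝ → Ω → ℝ) (ρ : Ω → ℝ) (c : Ω → ℝ),
      IsStoppingTime 𝓕 (fun ω => (ρ ω : WithTop ℝ)) → Sem X →
      Sem (fun t ω => X t ω + (if ρ ω ≤ t then c ω else 0)))
    (L U : ℝ → Ω → ℝ) (hLU : ∀ t ω, L t ω ≤ U t ω)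
    (hLdom : ∃ N : ℝ → Ω → ℝ, Sem N ∧ ∀ t ω, 0 ≤ L t ω + N t ω)
    (τ : Ω → ℝ) (hτ0 : ∀ ω, 0 ≤ τ ω)
    (hne : (SigmaSet 𝓕 Sem L U T τ).Nonempty)
    (σstar : Ω → ℝ)
    (hub : ∀ σ ∈ SigmaSet 𝓕 Sem L U T τ, ∀ᵐ ω ∂μ, σ ω ≤ σstar ω)
    (hlub : ∀ g : Ω → ℝ, (∀ σ ∈ SigmaSet 𝓕 Sem L U T τ, ∀ᵐ ω ∂μ, σ ω ≤ g ω) →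
      ∀ᵐ ω ∂μ, σstar ω ≤ g ω)
    (hcomplete : ∀ f g : Ω → ℝ, (∀ᵐ ω ∂μ, f ω = g ω) →
      IsStoppingTime 𝓕 (fun ω => (f ω : WithTop ℝ)) → IsStoppingTime 𝓕 (fun ω => (g ω : WithTop ℝ))) :
    IsStoppingTime 𝓕 (fun ω => (σstar ω : WithTop ℝ)) ∧
    ∃ σs : ℕ → Ω → ℝ, (∀ k, σs k ∈ SigmaSet 𝓕 Sem L U T τ) ∧
      (∀ k ω, σs k ω ≤ σs (k + 1) ω) ∧
      ∀ᵐ ω ∂μ, Tendsto (fun k => σs k ω) atTop (𝓝 (σstar ω)) := by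
  have hnorm : ∀ σ ∈ SigmaSet 𝓕 Sem L U T τ, ∀ ω, ‖σ ω‖ ≤ T := fun σ hσ ω => by
    rw [Real.norm_of_nonneg ((hτ0 ω).trans (hσ.2.1 ω).1)]
    exact (hσ.2.1 ω).2
  have hS : SupClosed (SigmaSet 𝓕 Sem L U T τ) :=
    supClosed_sigmaSet hSemAdd hSemNeg hSemMax hSemStop hSemJump hLU hLdom
  obtain ⟨σs, hσs, hmono, hσs_ub⟩ := hS.exists_monotone_ae_le_iSup (μ := μ) hne
    (fun σ hσ => measurable_of_isStoppingTime_coe hσ.1) hnorm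
  have hbdd : ∀ ω, BddAbove (range fun n => σs n ω) := fun ω =>
    ⟨T, by rintro _ ⟨n, rfl⟩; exact ((hσs n).2.1 ω).2⟩
  have hae : ∀ᵐ ω ∂μ, ⨆ n, σs n ω = σstar ω := by
    filter_upwards [hlub _ hσs_ub, ae_all_iff.2 fun n => hub _ (hσs n)] with ω hle hge
    exact le_antisymm (ciSup_le hge) hle
  refine ⟨hcomplete _ _ hae (IsStoppingTime.ciSup (fun n => (hσs n).1) hbdd), σs, hσs,
    fun k ω => hmono k.le_succ ω, ?_⟩
  filter_upwards [hae] with ω hω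
  exact hω ▸ tendsto_atTop_ciSup (fun _ _ h => hmono h ω) (hbdd ω)

/-- with `L, U` of class (D), the essential supremum
`τ̊ = ess sup Σ_τ(L,U)` is a stopping time and is the a.s. limit of a
nondecreasing sequence of elements of `Σ_τ(L,U)`. -/
theorem essSup_sigmaSet_stoppingTime
    {Ω : Type*} {m : MeasurableSpace Ω} (μ : Measure Ω) [IsProbabilityMeasure μ]
    (𝓕 : Filtration ℝ m) (T : ℝ) (hT : 0 < T)
    (Sem : (ℝ → Ω → ℝ) → Prop)
    (hSemAdd : ∀ X Y : ℝ → Ω → ℝ, Sem X → Sem Y → Sem (fun t ω => X t ω + Y t ω))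
    (hSemNeg : ∀ X : ℝ → Ω → ℝ, Sem X → Sem (fun t ω => - X t ω))
    (hSemMax : ∀ X Y : ℝ → Ω → ℝ, Sem X → Sem Y →
      Sem (fun t ω => max (X t ω) (Y t ω)))
    (hSemStop : ∀ (X : ℝ → Ω → ℝ) (ν ρ : Ω → ℝ), IsStoppingTime 𝓕 (fun ω => (ρ ω : WithTop ℝ)) → Sem X →
      Sem (fun t ω => if t < ρ ω then X (max t (ν ω)) ω else 0))
    (hSemJump : ∀ (X : ℝ → Ω → ℝ) (ρ : Ω → ℝ) (c : Ω → ℝ),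
      IsStoppingTime 𝓕 (fun ω => (ρ ω : WithTop ℝ)) → Sem X →
      Sem (fun t ω => X t ω + (if ρ ω ≤ t then c ω else 0)))
    (L U : ℝ → Ω → ℝ) (hLU : ∀ t ω, L t ω ≤ U t ω)
    (hLD : ClassD 𝓕 T μ L) (hUD : ClassD 𝓕 T μ U)
    (hLdom : ∃ N : ℝ → Ω → ℝ, Sem N ∧ ∀ t ω, 0 ≤ L t ω + N t ω)
    (τ : Ω → ℝ) (hτ : IsStoppingTime 𝓕 (fun ω => (τ ω : WithTop ℝ))) (hτ0 : ∀ ω, 0 ≤ τ ω) (hτT : ∀ ω, τ ω ≤ T)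
    (hne : (SigmaSet 𝓕 Sem L U T τ).Nonempty)
    (σstar : Ω → ℝ)
    (hub : ∀ σ ∈ SigmaSet 𝓕 Sem L U T τ, ∀ᵐ ω ∂μ, σ ω ≤ σstar ω)
    (hlub : ∀ g : Ω → ℝ, (∀ σ ∈ SigmaSet 𝓕 Sem L U T τ, ∀ᵐ ω ∂μ, σ ω ≤ g ω) →
      ∀ᵐ ω ∂μ, σstar ω ≤ g ω)
    (hcomplete : ∀ f g : Ω → ℝ, (∀ᵐ ω ∂μ, f ω = g ω) →
      IsStoppingTime 𝓕 (fun ω => (f ω : WithTop ℝ)) → IsStoppingTime 𝓕 (fun ω => (g ω : WithTop ℝ))) :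
    IsStoppingTime 𝓕 (fun ω => (σstar ω : WithTop ℝ)) ∧
    ∃ σs : ℕ → Ω → ℝ, (∀ k, σs k ∈ SigmaSet 𝓕 Sem L U T τ) ∧
      (∀ k ω, σs k ω ≤ σs (k + 1) ω) ∧
      ∀ᵐ ω ∂μ, Tendsto (fun k => σs k ω) atTop (𝓝 (σstar ω)) :=
  essSup_sigmaSet_stoppingTime_general μ 𝓕 T Sem hSemAdd hSemNeg hSemMax hSemStop hSemJump L U hLU
    hLdom τ hτ0 hne σstar hub hlub hcomplete
end

section
/- Minimality (Skorokhod) condition forces contact: let Y, L, U be càdlàg with L ≤ Y ≤ U on [0,T), let R = R⁺ − R⁻ be the Jordan decomposition of a finite-variation càdlàg process such that ∫₀ᵗ (Y_{s−} − L_{s−}) dR⁺_s = ∫₀ᵗ (U_{s−} − Y_{s−}) dR⁻_s = 0 for all t < T. If there exist sequences t_n ↗ T, s_n ↗ T with R⁺_{t_{n+1}} > R⁺_{t_n} and R⁻_{s_{n+1}} > R⁻_{s_n} for all n, then limsup_{s→T−} Y_s = U_{T−} and liminf_{s→T−} Y_s = L_{T−}; in particular L_{T−} = U_{T−} whenever both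 limits U_{T−}, L_{T−} exist. -/
open MeasureTheory Filter Set Topology Function

/-! If `R⁺` kept increasing up to `T` while `lim_{T−} Y > L_{T−}`, then `Y₋ − L₋` would be
positive on a left neighbourhood of `T` charged by `dR⁺`. Since `Y₋ − L₋` is left-continuous,
a point `q` of that neighbourhood all of whose left neighbourhoods `(c, q]` carry `dR⁺`-mass
gives `∫_{(c,q]} (Y₋ − L₋) dR⁺ > 0`, contradicting minimality. Symmetrically
`lim_{T−} Y = U_{T−}`, while `L ≤ Y ≤ U` gives the reverse inequalities. -/

theorem MeasureTheory.Measure.exists_mem_Ioc_forall_lt_measure_Ioc_ne_zero {α : Type*}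
    [ConditionallyCompleteLinearOrder α] [TopologicalSpace α] [OrderTopology α]
    [FirstCountableTopology α] [MeasurableSpace α] (μ : Measure α) {a b : α}
    (h : μ (Ioc a b) ≠ 0) : ∃ q ∈ Ioc a b, ∀ c < q, μ (Ioc c q) ≠ 0 := by
  have hab : a ≤ b := (nonempty_of_measure_ne_zero h).elim fun _ hx => hx.1.le.trans hx.2
  set S := {x ∈ Icc a b | μ (Ioc x b) = 0}
  have hbS : b ∈ S := ⟨⟨hab, le_rfl⟩, by simp⟩
  have hS : BddBelow S := ⟨a, fun x hx => hx.1.1⟩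
  set q := sInf S
  have hqb : q ≤ b := csInf_le hS hbS
  obtain ⟨u, -, hu, huS⟩ := exists_seq_tendsto_sInf ⟨b, hbS⟩ hS
  have hμqb : μ (Ioc q b) = 0 := by
    refine measure_mono_null (fun y hy => ?_) (measure_iUnion_null fun n => (huS n).2)
    obtain ⟨n, hn⟩ := (hu.eventually (gt_mem_nhds hy.1)).exists
    exact mem_iUnion.2 ⟨n, hn, hy.2⟩
  have haq : a < q := (le_csInf ⟨b, hbS⟩ fun x hx => hx.1.1).lt_of_ne fun haq => h (haq ▸ hμqb)
  refine ⟨q, ⟨haq, hqb⟩, fun c hcq hμcq => ?_⟩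
  have hcS : max c a ∈ S := by
    refine ⟨⟨le_max_right c a, (max_lt hcq haq).le.trans hqb⟩, measure_mono_null ?_
      (measure_union_null hμcq hμqb)⟩
    rw [Ioc_union_Ioc_eq_Ioc hcq.le hqb]
    exact Ioc_subset_Ioc_left (le_max_left c a)
  exact (csInf_le hS hcS).not_gt (max_lt hcq haq)

theorem exists_mem_Ioc_nonpos_of_setLIntegral_ofReal_eq_zero (μ : Measure ℝ) {g : ℝ → ℝ}
    {a b : ℝ} (hg : ∀ x ∈ Ioc a b, ContinuousWithinAt g (Iic x) x) (hμ : μ (Ioc a b) ≠ 0)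
    (hint : ∫⁻ x in Ioc a b, ENNReal.ofReal (g x) ∂μ = 0) : ∃ x ∈ Ioc a b, g x ≤ 0 := by
  obtain ⟨q, hq, hμq⟩ := μ.exists_mem_Ioc_forall_lt_measure_Ioc_ne_zero hμ
  refine ⟨q, hq, not_lt.1 fun hgq => ?_⟩
  obtain ⟨c, hcq, hc⟩ := mem_nhdsLE_iff_exists_Ioc_subset.1
    ((hg q hq).eventually (lt_mem_nhds (half_lt_self hgq)))
  have hc'q : max c a < q := max_lt hcq hq.1
  have hle : ENNReal.ofReal (g q / 2) * μ (Ioc (max c a) q) ≤ 0 := calc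
    _ = ∫⁻ _ in Ioc (max c a) q, ENNReal.ofReal (g q / 2) ∂μ := (setLIntegral_const _ _).symm
    _ ≤ ∫⁻ x in Ioc (max c a) q, ENNReal.ofReal (g x) ∂μ :=
      setLIntegral_mono' measurableSet_Ioc fun x hx => ENNReal.ofReal_le_ofReal
        (hc (Ioc_subset_Ioc_left (le_max_left c a) hx)).le
    _ ≤ ∫⁻ x in Ioc a b, ENNReal.ofReal (g x) ∂μ :=
      lintegral_mono_set (Ioc_subset_Ioc (le_max_right c a) hq.2)
    _ = 0 := hint
  simp only [nonpos_iff_eq_zero, mul_eq_zero, ENNReal.ofReal_eq_zero] at hle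
  exact hle.elim (fun h => by linarith) (hμq _ hc'q)

theorem frequently_nonpos_of_setLIntegral_ofReal_eq_zero (μ : Measure ℝ) {g : ℝ → ℝ}
    {a T : ℝ} (haT : a < T) (hg : ∀ x ∈ Ioo a T, ContinuousWithinAt g (Iic x) x)
    (hint : ∀ t ∈ Ico a T, ∫⁻ x in Ioc a t, ENNReal.ofReal (g x) ∂μ = 0)
    (hμ : ∀ c < T, ∃ b < T, μ (Ioc c b) ≠ 0) : ∃ᶠ x in 𝓝[<] T, g x ≤ 0 := by
  refine (nhdsLT_basis T).frequently_iff.2 fun c hcT => ?_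
  obtain ⟨b, hbT, hμb⟩ := hμ (max c a) (max_lt hcT haT)
  have hcb : max c a < b := not_le.1 fun h => hμb (by simp [Ioc_eq_empty_of_le h])
  have hsub : Ioc (max c a) b ⊆ Ioo a T := fun x hx =>
    ⟨(le_max_right c a).trans_lt hx.1, hx.2.trans_lt hbT⟩
  have hint' : ∫⁻ x in Ioc (max c a) b, ENNReal.ofReal (g x) ∂μ = 0 :=
    nonpos_iff_eq_zero.1 <| (lintegral_mono_set (Ioc_subset_Ioc_left (le_max_right c a))).trans_eq
      (hint b ⟨(le_max_right c a).trans hcb.le, hbT⟩)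
  obtain ⟨x, hx, hgx⟩ := exists_mem_Ioc_nonpos_of_setLIntegral_ofReal_eq_zero μ
    (fun x hx => hg x (hsub hx)) hμb hint'
  exact ⟨x, ⟨(le_max_left c a).trans_lt hx.1, (hsub hx).2⟩, hgx⟩

theorem StieltjesFunction.exists_lt_measure_Ioc_ne_zero_of_lt_seq (R : StieltjesFunction ℝ)
    {T : ℝ} {u : ℕ → ℝ} (huT : ∀ n, u n < T) (hu : Tendsto u atTop (𝓝 T))
    (hR : ∀ n, R (u n) < R (u (n + 1))) {c : ℝ} (hc : c < T) :
    ∃ b < T, R.measure (Ioc c b) ≠ 0 := by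
  obtain ⟨n, hn⟩ := (hu.eventually (lt_mem_nhds hc)).exists
  refine ⟨u (n + 1), huT _, ?_⟩
  rw [R.measure_Ioc, ne_eq, ENNReal.ofReal_eq_zero, not_le, sub_pos]
  exact (R.mono hn.le).trans_lt (hR n)

theorem le_of_setLIntegral_leftLim_sub_eq_zero (μ : Measure ℝ) {A B : ℝ → ℝ} {a T lA lB : ℝ}
    (haT : a < T) (hA : Tendsto A (𝓝[<] T) (𝓝 lA)) (hB : Tendsto B (𝓝[<] T) (𝓝 lB))
    (hAl : ∀ x ∈ Ioo a T, ∃ l, Tendsto A (𝓝[<] x) (𝓝 l))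
    (hBl : ∀ x ∈ Ioo a T, ∃ l, Tendsto B (𝓝[<] x) (𝓝 l))
    (hint : ∀ t ∈ Ico a T,
      ∫⁻ x in Ioc a t, ENNReal.ofReal (leftLim A x - leftLim B x) ∂μ = 0)
    (hμ : ∀ c < T, ∃ b < T, μ (Ioc c b) ≠ 0) : lA ≤ lB := by
  have hleft : ∀ {f : ℝ → ℝ} {x : ℝ}, (∃ l, Tendsto f (𝓝[<] x) (𝓝 l)) →
      ContinuousWithinAt (leftLim f) (Iic x) x :=
    fun h => continuousWithinAt_leftLim_Iic (tendsto_leftLim_of_tendsto h)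
  have hlim : Tendsto (fun x => leftLim A x - leftLim B x) (𝓝[<] T) (𝓝 (lA - lB)) := by
    have hAT := (hleft ⟨lA, hA⟩).tendsto.mono_left (nhdsWithin_mono T Iio_subset_Iic_self)
    have hBT := (hleft ⟨lB, hB⟩).tendsto.mono_left (nhdsWithin_mono T Iio_subset_Iic_self)
    rw [leftLim_eq_of_tendsto hA] at hAT
    rw [leftLim_eq_of_tendsto hB] at hBT
    exact hAT.sub hBT
  have hfreq := frequently_nonpos_of_setLIntegral_ofReal_eq_zero μ haT
    (fun x hx => (hleft (hAl x hx)).sub (hleft (hBl x hx))) hint hμ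
  exact sub_nonpos.1 (isClosed_Iic.mem_of_frequently_of_tendsto hfreq hlim)

theorem skorokhod_minimality_forces_contact_general (T : ℝ) (hT : 0 < T)
    (Y L U : ℝ → ℝ)
    (hbar : ∀ t ∈ Set.Ico (0:ℝ) T, L t ≤ Y t ∧ Y t ≤ U t)
    (hYl : ∀ s ∈ Set.Ioc (0:ℝ) T, ∃ l, Tendsto Y (𝓝[<] s) (𝓝 l))
    (hLl : ∀ s ∈ Set.Ioc (0:ℝ) T, ∃ l, Tendsto L (𝓝[<] s) (𝓝 l))
    (hUl : ∀ s ∈ Set.Ioc (0:ℝ) T, ∃ l, Tendsto U (𝓝[<] s) (𝓝 l))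
    (Rp Rn : StieltjesFunction ℝ)
    (hskorL : ∀ t ∈ Set.Ico (0:ℝ) T,
      ∫⁻ s in Set.Ioc 0 t,
        ENNReal.ofReal (leftLim Y s - leftLim L s) ∂(Rp.measure) = 0)
    (hskorU : ∀ t ∈ Set.Ico (0:ℝ) T,
      ∫⁻ s in Set.Ioc 0 t,
        ENNReal.ofReal (leftLim U s - leftLim Y s) ∂(Rn.measure) = 0)
    (tn sn : ℕ → ℝ)
    (htnT : ∀ n, 0 ≤ tn n ∧ tn n < T)
    (htnlim : Tendsto tn atTop (𝓝 T))
    (hsnT : ∀ n, 0 ≤ sn n ∧ sn n < T)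
    (hsnlim : Tendsto sn atTop (𝓝 T))
    (hRp : ∀ n, Rp (tn n) < Rp (tn (n + 1)))
    (hRn : ∀ n, Rn (sn n) < Rn (sn (n + 1))) :
    limsup Y (𝓝[<] T) = leftLim U T ∧
    liminf Y (𝓝[<] T) = leftLim L T ∧
    ((∃ l, Tendsto Y (𝓝[<] T) (𝓝 l)) → leftLim L T = leftLim U T) := by
  have hT' : T ∈ Ioc 0 T := ⟨hT, le_rfl⟩
  obtain ⟨lY, hlY⟩ := hYl T hT'
  obtain ⟨lL, hlL⟩ := hLl T hT'
  obtain ⟨lU, hlU⟩ := hUl T hT'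
  rw [leftLim_eq_of_tendsto hlL, leftLim_eq_of_tendsto hlU, hlY.limsup_eq, hlY.liminf_eq]
  have hbarT : ∀ᶠ t in 𝓝[<] T, L t ≤ Y t ∧ Y t ≤ U t := by
    filter_upwards [Ioo_mem_nhdsLT hT] with t ht using hbar t (Ioo_subset_Ico_self ht)
  have hLY : lL ≤ lY := le_of_tendsto_of_tendsto hlL hlY (hbarT.mono fun _ h => h.1)
  have hYU : lY ≤ lU := le_of_tendsto_of_tendsto hlY hlU (hbarT.mono fun _ h => h.2)
  have hYL : lY ≤ lL := le_of_setLIntegral_leftLim_sub_eq_zero Rp.measure hT hlY hlL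
    (fun x hx => hYl x (Ioo_subset_Ioc_self hx)) (fun x hx => hLl x (Ioo_subset_Ioc_self hx))
    hskorL fun _ => Rp.exists_lt_measure_Ioc_ne_zero_of_lt_seq (fun n => (htnT n).2) htnlim hRp
  have hUY : lU ≤ lY := le_of_setLIntegral_leftLim_sub_eq_zero Rn.measure hT hlU hlY
    (fun x hx => hUl x (Ioo_subset_Ioc_self hx)) (fun x hx => hYl x (Ioo_subset_Ioc_self hx))
    hskorU fun _ => Rn.exists_lt_measure_Ioc_ne_zero_of_lt_seq (fun n => (hsnT n).2) hsnlim hRn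
  obtain rfl : lY = lU := le_antisymm hYU hUY
  obtain rfl : lY = lL := le_antisymm hYL hLY
  exact ⟨rfl, rfl, fun _ => rfl⟩

/-- the minimality (Skorokhod) condition forces contact of the
barriers.  This is the pathwise lemma from the proof of Theorem 5.2: `Y` lies
between `L` and `U` on `[0,T)`, the Stieltjes measures of `R⁺` and `R⁻`
annihilate `Y_{−} − L_{−}` and `U_{−} − Y_{−}` respectively, and both `R⁺` and
`R⁻` keep increasing up to `T`; then `limsup_{s→T−} Y = U_{T−}` and
`liminf_{s→T−} Y = L_{T−}`, and in particular `L_{T−} = U_{T−}` whenever the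
left limit of `Y` at `T` exists. -/
theorem skorokhod_minimality_forces_contact (T : ℝ) (hT : 0 < T)
    (Y L U : ℝ → ℝ)
    (hbar : ∀ t ∈ Set.Ico (0:ℝ) T, L t ≤ Y t ∧ Y t ≤ U t)
    (hYl : ∀ s ∈ Set.Ioc (0:ℝ) T, ∃ l, Tendsto Y (𝓝[<] s) (𝓝 l))
    (hLl : ∀ s ∈ Set.Ioc (0:ℝ) T, ∃ l, Tendsto L (𝓝[<] s) (𝓝 l))
    (hUl : ∀ s ∈ Set.Ioc (0:ℝ) T, ∃ l, Tendsto U (𝓝[<] s) (𝓝 l))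
    (Rp Rn : StieltjesFunction ℝ)
    (hskorL : ∀ t ∈ Set.Ico (0:ℝ) T,
      ∫⁻ s in Set.Ioc 0 t,
        ENNReal.ofReal (leftLim Y s - leftLim L s) ∂(Rp.measure) = 0)
    (hskorU : ∀ t ∈ Set.Ico (0:ℝ) T,
      ∫⁻ s in Set.Ioc 0 t,
        ENNReal.ofReal (leftLim U s - leftLim Y s) ∂(Rn.measure) = 0)
    (tn sn : ℕ → ℝ)
    (htn : ∀ n, tn n ≤ tn (n + 1)) (htnT : ∀ n, 0 ≤ tn n ∧ tn n < T)
    (htnlim : Tendsto tn atTop (𝓝 T))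
    (hsn : ∀ n, sn n ≤ sn (n + 1)) (hsnT : ∀ n, 0 ≤ sn n ∧ sn n < T)
    (hsnlim : Tendsto sn atTop (𝓝 T))
    (hRp : ∀ n, Rp (tn n) < Rp (tn (n + 1)))
    (hRn : ∀ n, Rn (sn n) < Rn (sn (n + 1))) :
    limsup Y (𝓝[<] T) = leftLim U T ∧
    liminf Y (𝓝[<] T) = leftLim L T ∧
    ((∃ l, Tendsto Y (𝓝[<] T) (𝓝 l)) → leftLim L T = leftLim U T) :=
  skorokhod_minimality_forces_contact_general T hT Y L U hbar hYl hLl hUl Rp Rn hskorL hskorU tn sn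
    htnT htnlim hsnT hsnlim hRp hRn
end
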